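/- arXiv:1408.4500 — 3 statements merged into one kernel-verified Lean document; each statement's English description precedes it below -/
import Mathlib

section
/- Let x ∈ ℝⁿ satisfy l ≤ x ≤ u componentwise, let d ∈ ℝⁿ, and let 0 < β₁ ≤ β₂. Then ‖P(x − β₁·d) − x‖₂ ≤ ‖P(x − β₂·d) − x‖₂ and ‖P(x − β₂·d) − x‖₂ ≤ (β₂/β₁)·‖P(x − β₁·d) − x‖₂; that is, along the projected gradient path β ↦ P(x − β·d), the norm ‖P(x − β·d) − x‖₂ is nondecreasing in β while the ratio ‖P(x − β·d) − x‖₂ / β is nonincreasing in β. -/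
/-- Componentwise projection onto the box `[l, u]`. -/
noncomputable def boxProj {n : ℕ} (l u z : EuclideanSpace ℝ (Fin n)) :
    EuclideanSpace ℝ (Fin n) :=
  WithLp.toLp 2 (fun i => max (l i) (min (u i) (z i)))

/-!
Componentwise, `P(x - β d) - x` is the clamp of `β • (-d)` to the box `[l - x, u - x]`, which
contains `0`. For a fixed direction `t`, the magnitude of the clamp of `β t` to `[a, b]` with
`a ≤ 0 ≤ b` is `min c (β |t|)`, where `c` is `b` or `-a` according to the sign of `t`. Such a
function of `β` is nondecreasing, and `β ↦ min c (β |t|) / β` is nonincreasing; summing squares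
over the coordinates transfers both facts to the Euclidean norm.
-/

lemma min_le_min_mul_of_one_le {c s r : ℝ} (hs : 0 ≤ s) (hr : 1 ≤ r) :
    min c s ≤ min c (r * s) :=
  min_le_min_left c (le_mul_of_one_le_left hs hr)

lemma min_mul_le_mul_min_of_one_le {c s r : ℝ} (hc : 0 ≤ c) (hr : 1 ≤ r) :
    min c (r * s) ≤ r * min c s :=
  calc min c (r * s) ≤ min (r * c) (r * s) := min_le_min_right _ (le_mul_of_one_le_left hc hr)
    _ = r * min c s := (mul_min_of_nonneg _ _ (zero_le_one.trans hr)).symm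

lemma exists_abs_max_min_mul_eq_min {a b : ℝ} (ha : a ≤ 0) (hb : 0 ≤ b) (t : ℝ) :
    ∃ c, 0 ≤ c ∧ ∀ r, 0 ≤ r → |max a (min b (r * t))| = min c (r * |t|) := by
  rcases le_total 0 t with ht | ht
  · refine ⟨b, hb, fun r hr => ?_⟩
    have hrt : 0 ≤ r * t := mul_nonneg hr ht
    rw [max_eq_right (ha.trans (le_min hb hrt)), abs_of_nonneg (le_min hb hrt), abs_of_nonneg ht]
  · refine ⟨-a, neg_nonneg.mpr ha, fun r hr => ?_⟩
    have hrt : r * t ≤ 0 := mul_nonpos_of_nonneg_of_nonpos hr ht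
    rw [min_eq_right (hrt.trans hb), abs_of_nonpos (max_le ha hrt), abs_of_nonpos ht,
      ← min_neg_neg, mul_neg]

lemma abs_max_min_le_abs_max_min_mul {a b : ℝ} (ha : a ≤ 0) (hb : 0 ≤ b) (t : ℝ) {r : ℝ}
    (hr : 1 ≤ r) :
    |max a (min b t)| ≤ |max a (min b (r * t))| ∧
      |max a (min b (r * t))| ≤ r * |max a (min b t)| := by
  obtain ⟨c, hc, hclamp⟩ := exists_abs_max_min_mul_eq_min ha hb t
  have h1 := hclamp 1 zero_le_one
  rw [one_mul, one_mul] at h1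
  rw [h1, hclamp r (zero_le_one.trans hr)]
  exact ⟨min_le_min_mul_of_one_le (abs_nonneg t) hr, min_mul_le_mul_min_of_one_le hc hr⟩

lemma EuclideanSpace.norm_le_norm_of_forall_abs_le {ι : Type*} [Fintype ι]
    {v w : EuclideanSpace ℝ ι} (h : ∀ i, |v i| ≤ |w i|) : ‖v‖ ≤ ‖w‖ := by
  rw [EuclideanSpace.norm_eq, EuclideanSpace.norm_eq]
  gcongr with i
  simpa only [Real.norm_eq_abs] using h i

lemma boxProj_sub_smul_sub_apply {n : ℕ} (l u x d : EuclideanSpace ℝ (Fin n)) (β : ℝ)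
    (i : Fin n) :
    (boxProj l u (x - β • d) - x) i = max (l i - x i) (min (u i - x i) (β * -d i)) := by
  simp only [boxProj, PiLp.sub_apply, PiLp.smul_apply, smul_eq_mul, ← max_sub_sub_right,
    ← min_sub_sub_right]
  ring_nf

theorem stmt11_general {n : ℕ} (l u x d : EuclideanSpace ℝ (Fin n))
    (hlx : ∀ i, l i ≤ x i) (hxu : ∀ i, x i ≤ u i)
    (β1 β2 : ℝ) (hβ1 : 0 < β1) (hβ12 : β1 ≤ β2) :
    ‖boxProj l u (x - β1 • d) - x‖ ≤ ‖boxProj l u (x - β2 • d) - x‖ ∧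
    ‖boxProj l u (x - β2 • d) - x‖ ≤ (β2 / β1) * ‖boxProj l u (x - β1 • d) - x‖ := by
  set r := β2 / β1
  have hr : 1 ≤ r := (one_le_div hβ1).mpr hβ12
  have hβ2 : β2 = r * β1 := (div_mul_cancel₀ β2 hβ1.ne').symm
  have key (i : Fin n) := abs_max_min_le_abs_max_min_mul (sub_nonpos.mpr (hlx i))
    (sub_nonneg.mpr (hxu i)) (β1 * -d i) hr
  simp only [← mul_assoc, ← hβ2, ← boxProj_sub_smul_sub_apply] at key
  refine ⟨EuclideanSpace.norm_le_norm_of_forall_abs_le fun i => (key i).1, ?_⟩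
  calc ‖boxProj l u (x - β2 • d) - x‖ ≤ ‖r • (boxProj l u (x - β1 • d) - x)‖ :=
        EuclideanSpace.norm_le_norm_of_forall_abs_le fun i => by
          simpa only [PiLp.smul_apply, smul_eq_mul, abs_mul, abs_of_nonneg (zero_le_one.trans hr)]
            using (key i).2
    _ = r * ‖boxProj l u (x - β1 • d) - x‖ := by
        rw [norm_smul, Real.norm_of_nonneg (zero_le_one.trans hr)]

/-- Monotonicity properties of the projected gradient path: for `0 < β₁ ≤ β₂`,
`‖P(x − β₁ d) − x‖ ≤ ‖P(x − β₂ d) − x‖` and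
`‖P(x − β₂ d) − x‖ ≤ (β₂/β₁) ‖P(x − β₁ d) − x‖`. -/
theorem stmt11 {n : ℕ} (l u x d : EuclideanSpace ℝ (Fin n))
    (hlu : ∀ i, l i ≤ u i) (hlx : ∀ i, l i ≤ x i) (hxu : ∀ i, x i ≤ u i)
    (β1 β2 : ℝ) (hβ1 : 0 < β1) (hβ12 : β1 ≤ β2) :
    ‖boxProj l u (x - β1 • d) - x‖ ≤ ‖boxProj l u (x - β2 • d) - x‖ ∧
    ‖boxProj l u (x - β2 • d) - x‖ ≤ (β2 / β1) * ‖boxProj l u (x - β1 • d) - x‖ :=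
  stmt11_general l u x d hlx hxu β1 β2 hβ1 hβ12
end

section
/- Let f : ℝⁿ → ℝ and c : ℝⁿ → ℝ^m be continuously differentiable, let K ⊂ ℝⁿ be compact, and let μ > 0 be fixed. Let {x_j} ⊂ K with l ≤ x_j ≤ u for all j, and let {y_j}, {ŷ_j} ⊂ ℝ^m satisfy ‖F_L(x_j, ŷ_j)‖₂ ≤ ‖F_L(x_j, y_j)‖₂ for all j. Suppose {t_j} and {T_j} are positive sequences with t_j → 0 and T_j → 0 such that for every j, ‖c(x_j)‖₂ ≤ t_j and min{ ‖F_L(x_j, ŷ_j)‖₂, ‖F_AL(x_j, y_j, μ)‖₂ } ≤ T_j. Then c(x_j) → 0 and F_L(x_j, ŷ_j) → 0; consequently, every limit point (x*, y*) of {(x_j, ŷ_j)} satisfies c(x*) = 0 and F_L(x*, y*) = 0, i.e., it is a first-order stationary point for minimizing f(x) subject to c(x) = 0 and l ≤ x ≤ u. -/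
open Filter

/-- Lagrangian stationarity measure `F_L(x, y) = P(x − (∇f(x) − J(x)ᵀy)) − x`. -/
noncomputable def FL {n m : ℕ} (l u : EuclideanSpace ℝ (Fin n))
    (f : EuclideanSpace ℝ (Fin n) → ℝ)
    (c : EuclideanSpace ℝ (Fin n) → EuclideanSpace ℝ (Fin m))
    (x : EuclideanSpace ℝ (Fin n)) (y : EuclideanSpace ℝ (Fin m)) :
    EuclideanSpace ℝ (Fin n) :=
  boxProj l u (x - (gradient f x - ContinuousLinearMap.adjoint (fderiv ℝ c x) y)) - x

/-- Augmented Lagrangian stationarity measure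
`F_AL(x, y, μ) = P(x − μ(∇f(x) − J(x)ᵀy) − J(x)ᵀc(x)) − x`. -/
noncomputable def FAL {n m : ℕ} (l u : EuclideanSpace ℝ (Fin n))
    (f : EuclideanSpace ℝ (Fin n) → ℝ)
    (c : EuclideanSpace ℝ (Fin n) → EuclideanSpace ℝ (Fin m))
    (x : EuclideanSpace ℝ (Fin n)) (y : EuclideanSpace ℝ (Fin m)) (μ : ℝ) :
    EuclideanSpace ℝ (Fin n) :=
  boxProj l u (x - μ • (gradient f x - ContinuousLinearMap.adjoint (fderiv ℝ c x) y)
    - ContinuousLinearMap.adjoint (fderiv ℝ c x) (c x)) - x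

/-!
For `x` in the box, a projected step `P(x − s) − x` shrinks by at most the factor `max 1 μ⁻¹`
when `s` is rescaled to `μ s`. Since `F_AL(x, y, μ)` is the projected step along
`μ(∇f − Jᵀy)` perturbed by `Jᵀc`, and `P` is 1-Lipschitz,
`‖F_L(x, y)‖ ≤ max 1 μ⁻¹ (‖F_AL(x, y, μ)‖ + ‖J(x)ᵀc(x)‖)`. Either alternative of the
stationarity target therefore bounds `‖F_L(x_j, ŷ_j)‖` by a quantity tending to zero, as
`J(x_j)` stays bounded on the compact set `K` while `c(x_j) → 0`. Limit points inherit both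
limits by continuity of `c` and `F_L`.
-/

lemma abs_clamp_sub_le_max_one_inv_mul {a b x s μ : ℝ} (hax : a ≤ x) (hxb : x ≤ b)
    (hμ : 0 < μ) :
    |max a (min b (x - s)) - x| ≤ max 1 μ⁻¹ * |max a (min b (x - μ * s)) - x| := by
  have hC1 : 1 ≤ max 1 μ⁻¹ := le_max_left _ _
  have hCμ : 1 ≤ max 1 μ⁻¹ * μ :=
    calc (1 : ℝ) = μ⁻¹ * μ := (inv_mul_cancel₀ hμ.ne').symm
      _ ≤ max 1 μ⁻¹ * μ := mul_le_mul_of_nonneg_right (le_max_right _ _) hμ.le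
  rcases le_total 0 s with hs | hs
  · have hμs : 0 ≤ μ * s := mul_nonneg hμ.le hs
    rw [min_eq_right (by linarith : x - s ≤ b), min_eq_right (by linarith : x - μ * s ≤ b),
      abs_of_nonpos (sub_nonpos.2 (max_le hax (by linarith))),
      abs_of_nonpos (sub_nonpos.2 (max_le hax (by linarith)))]
    rcases le_total a (x - s) with h | h <;> rcases le_total a (x - μ * s) with h' | h' <;>
      simp only [max_eq_left, max_eq_right, h, h'] <;> nlinarith
  · have hμs : μ * s ≤ 0 := mul_nonpos_of_nonneg_of_nonpos hμ.le hs
    rw [max_eq_right (le_min (hax.trans hxb) (by linarith) : a ≤ min b (x - s)),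
      max_eq_right (le_min (hax.trans hxb) (by linarith) : a ≤ min b (x - μ * s)),
      abs_of_nonneg (sub_nonneg.2 (le_min hxb (by linarith))),
      abs_of_nonneg (sub_nonneg.2 (le_min hxb (by linarith)))]
    rcases le_total b (x - s) with h | h <;> rcases le_total b (x - μ * s) with h' | h' <;>
      simp only [min_eq_left, min_eq_right, h, h'] <;> nlinarith

lemma EuclideanSpace.norm_le_norm_of_forall_norm_le {𝕜 ι : Type*} [RCLike 𝕜] [Fintype ι]
    {a b : EuclideanSpace 𝕜 ι} (h : ∀ i, ‖a i‖ ≤ ‖b i‖) : ‖a‖ ≤ ‖b‖ := by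
  rw [EuclideanSpace.norm_eq, EuclideanSpace.norm_eq]
  gcongr with i
  exact h i

section BoxProjection

variable {n : ℕ} (l u : EuclideanSpace ℝ (Fin n))

@[simp]
lemma boxProj_apply (z : EuclideanSpace ℝ (Fin n)) (i : Fin n) :
    boxProj l u z i = max (l i) (min (u i) (z i)) :=
  rfl

lemma lipschitzWith_boxProj : LipschitzWith 1 (boxProj l u) := by
  refine LipschitzWith.of_dist_le_mul fun z z' => ?_
  rw [NNReal.coe_one, one_mul, dist_eq_norm, dist_eq_norm]
  refine EuclideanSpace.norm_le_norm_of_forall_norm_le fun i => ?_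
  simpa [← dist_eq_norm] using
    ((LipschitzWith.id.const_min (u i)).const_max (l i)).dist_le_mul (z i) (z' i)

lemma norm_boxProj_sub_le_max_one_inv_mul {x : EuclideanSpace ℝ (Fin n)}
    (hx : ∀ i, l i ≤ x i ∧ x i ≤ u i) (d : EuclideanSpace ℝ (Fin n)) {μ : ℝ} (hμ : 0 < μ) :
    ‖boxProj l u (x - d) - x‖ ≤ max 1 μ⁻¹ * ‖boxProj l u (x - μ • d) - x‖ := by
  have hC : 0 ≤ max 1 μ⁻¹ := zero_le_one.trans (le_max_left _ _)
  rw [← abs_of_nonneg hC, ← Real.norm_eq_abs, ← norm_smul]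
  refine EuclideanSpace.norm_le_norm_of_forall_norm_le fun i => ?_
  simpa [abs_of_nonneg hC] using abs_clamp_sub_le_max_one_inv_mul (hx i).1 (hx i).2 hμ

end BoxProjection

section Stationarity

variable {n m : ℕ} (l u : EuclideanSpace ℝ (Fin n)) {f : EuclideanSpace ℝ (Fin n) → ℝ}
  {c : EuclideanSpace ℝ (Fin n) → EuclideanSpace ℝ (Fin m)}

lemma norm_FL_le_max_one_inv_mul {x : EuclideanSpace ℝ (Fin n)}
    (hx : ∀ i, l i ≤ x i ∧ x i ≤ u i) (y : EuclideanSpace ℝ (Fin m)) {μ : ℝ} (hμ : 0 < μ) :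
    ‖FL l u f c x y‖ ≤ max 1 μ⁻¹ * (‖FAL l u f c x y μ‖ +
      ‖ContinuousLinearMap.adjoint (fderiv ℝ c x) (c x)‖) := by
  set v := gradient f x - ContinuousLinearMap.adjoint (fderiv ℝ c x) y
  set w := ContinuousLinearMap.adjoint (fderiv ℝ c x) (c x)
  have hsplit : boxProj l u (x - μ • v) - x =
      FAL l u f c x y μ + (boxProj l u (x - μ • v) - boxProj l u (x - μ • v - w)) := by
    simp only [FAL, v, w]
    abel
  have hlip : ‖boxProj l u (x - μ • v) - boxProj l u (x - μ • v - w)‖ ≤ ‖w‖ := by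
    simpa [← dist_eq_norm] using
      (lipschitzWith_boxProj l u).dist_le_mul (x - μ • v) (x - μ • v - w)
  calc ‖FL l u f c x y‖ ≤ max 1 μ⁻¹ * ‖boxProj l u (x - μ • v) - x‖ :=
        norm_boxProj_sub_le_max_one_inv_mul l u hx v hμ
    _ ≤ max 1 μ⁻¹ * (‖FAL l u f c x y μ‖ + ‖w‖) := by
        gcongr
        rw [hsplit]
        exact (norm_add_le _ _).trans (by gcongr)

lemma norm_FL_le_of_min_le {x : EuclideanSpace ℝ (Fin n)} (hx : ∀ i, l i ≤ x i ∧ x i ≤ u i)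
    {y yh : EuclideanSpace ℝ (Fin m)} (hyh : ‖FL l u f c x yh‖ ≤ ‖FL l u f c x y‖)
    {μ T : ℝ} (hμ : 0 < μ) (hT : min ‖FL l u f c x yh‖ ‖FAL l u f c x y μ‖ ≤ T) :
    ‖FL l u f c x yh‖ ≤ max 1 μ⁻¹ * (T + ‖ContinuousLinearMap.adjoint (fderiv ℝ c x) (c x)‖) := by
  have hC : 1 ≤ max 1 μ⁻¹ := le_max_left _ _
  rcases min_le_iff.mp hT with hL | hAL
  · have hT0 : 0 ≤ T := (norm_nonneg _).trans hL
    nlinarith [norm_nonneg (ContinuousLinearMap.adjoint (fderiv ℝ c x) (c x))]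
  · calc ‖FL l u f c x yh‖ ≤ ‖FL l u f c x y‖ := hyh
      _ ≤ _ := norm_FL_le_max_one_inv_mul l u hx y hμ
      _ ≤ _ := by gcongr

lemma ContDiff.continuous_adjoint_fderiv (hc : ContDiff ℝ 1 c) :
    Continuous fun z => ContinuousLinearMap.adjoint (fderiv ℝ c z) :=
  (LinearIsometryEquiv.continuous _).comp (hc.continuous_fderiv one_ne_zero)

lemma continuous_uncurry_FL (hf : ContDiff ℝ 1 f) (hc : ContDiff ℝ 1 c) :
    Continuous (Function.uncurry (FL l u f c)) := by
  have hgrad : Continuous (gradient f) :=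
    (LinearIsometryEquiv.continuous _).comp (hf.continuous_fderiv one_ne_zero)
  have hadj := hc.continuous_adjoint_fderiv
  exact ((lipschitzWith_boxProj l u).continuous.comp (continuous_fst.sub
    ((hgrad.comp continuous_fst).sub ((hadj.comp continuous_fst).clm_apply continuous_snd)))).sub
    continuous_fst

end Stationarity

lemma IsCompact.tendsto_apply_zero {𝕜 X E F ι : Type*} [NontriviallyNormedField 𝕜]
    [TopologicalSpace X] [NormedAddCommGroup E] [NormedSpace 𝕜 E] [NormedAddCommGroup F]
    [NormedSpace 𝕜 F] {K : Set X} (hK : IsCompact K) {A : X → E →L[𝕜] F} (hA : ContinuousOn A K)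
    {x : ι → X} (hx : ∀ j, x j ∈ K) {v : ι → E} {L : Filter ι} (hv : Tendsto v L (nhds 0)) :
    Tendsto (fun j => A (x j) (v j)) L (nhds 0) := by
  obtain ⟨M, hM⟩ := hK.exists_bound_of_continuousOn hA
  refine squeeze_zero_norm (fun j => (A (x j)).le_of_opNorm_le (hM _ (hx j)) (v j)) ?_
  simpa using hv.norm.const_mul M

lemma MapClusterPt.apply_eq_of_tendsto {X Y ι : Type*} [TopologicalSpace X] [TopologicalSpace Y]
    [T2Space Y] {L : Filter ι} {u : ι → X} {p : X} (hp : MapClusterPt p L u) {g : X → Y}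
    (hg : Continuous g) {b : Y} (hgu : Tendsto (g ∘ u) L (nhds b)) : g p = b :=
  eq_of_nhds_neBot ((hp.continuousAt_comp hg.continuousAt).clusterPt.mono hgu)

theorem stmt13_general {n m : ℕ} (l u : EuclideanSpace ℝ (Fin n))
    (f : EuclideanSpace ℝ (Fin n) → ℝ)
    (c : EuclideanSpace ℝ (Fin n) → EuclideanSpace ℝ (Fin m))
    (hf : ContDiff ℝ 1 f) (hc : ContDiff ℝ 1 c)
    (K : Set (EuclideanSpace ℝ (Fin n))) (hK : IsCompact K)
    (μ : ℝ) (hμ : 0 < μ)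
    (x : ℕ → EuclideanSpace ℝ (Fin n)) (hxK : ∀ j, x j ∈ K)
    (hbox : ∀ j, ∀ i, l i ≤ x j i ∧ x j i ≤ u i)
    (y yh : ℕ → EuclideanSpace ℝ (Fin m))
    (hyh : ∀ j, ‖FL l u f c (x j) (yh j)‖ ≤ ‖FL l u f c (x j) (y j)‖)
    (t T : ℕ → ℝ)
    (ht_lim : Tendsto t atTop (nhds 0)) (hT_lim : Tendsto T atTop (nhds 0))
    (hc_target : ∀ j, ‖c (x j)‖ ≤ t j)
    (hstat_target : ∀ j,
      min ‖FL l u f c (x j) (yh j)‖ ‖FAL l u f c (x j) (y j) μ‖ ≤ T j) :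
    Tendsto (fun j => c (x j)) atTop (nhds 0) ∧
    Tendsto (fun j => FL l u f c (x j) (yh j)) atTop (nhds 0) ∧
    ∀ p : EuclideanSpace ℝ (Fin n) × EuclideanSpace ℝ (Fin m),
      MapClusterPt p atTop (fun j => (x j, yh j)) →
        c p.1 = 0 ∧ FL l u f c p.1 p.2 = 0 := by
  have hc_lim : Tendsto (fun j => c (x j)) atTop (nhds 0) := squeeze_zero_norm hc_target ht_lim
  have hJc_lim : Tendsto (fun j => ContinuousLinearMap.adjoint (fderiv ℝ c (x j)) (c (x j)))
      atTop (nhds 0) :=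
    hK.tendsto_apply_zero hc.continuous_adjoint_fderiv.continuousOn hxK hc_lim
  have hbound : Tendsto (fun j => max 1 μ⁻¹ * (T j +
      ‖ContinuousLinearMap.adjoint (fderiv ℝ c (x j)) (c (x j))‖)) atTop (nhds 0) := by
    simpa only [norm_zero, add_zero, mul_zero] using
      (hT_lim.add hJc_lim.norm).const_mul (max 1 μ⁻¹)
  have hFL_lim : Tendsto (fun j => FL l u f c (x j) (yh j)) atTop (nhds 0) :=
    squeeze_zero_norm (fun j => norm_FL_le_of_min_le l u (hbox j) (hyh j) hμ (hstat_target j))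
      hbound
  refine ⟨hc_lim, hFL_lim, fun p hp => ⟨?_, ?_⟩⟩
  · exact hp.apply_eq_of_tendsto (hc.continuous.comp continuous_fst) hc_lim
  · exact hp.apply_eq_of_tendsto (continuous_uncurry_FL l u hf hc) hFL_lim

/-- If `‖F_L(x_j, ŷ_j)‖ ≤ ‖F_L(x_j, y_j)‖`, `‖c(x_j)‖ ≤ t_j → 0` and
`min{‖F_L(x_j, ŷ_j)‖, ‖F_AL(x_j, y_j, μ)‖} ≤ T_j → 0`, then `c(x_j) → 0` and
`F_L(x_j, ŷ_j) → 0`; hence every limit point `(x*, y*)` of `{(x_j, ŷ_j)}` satisfies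
`c(x*) = 0` and `F_L(x*, y*) = 0`. -/
theorem stmt13 {n m : ℕ} (l u : EuclideanSpace ℝ (Fin n)) (hlu : ∀ i, l i ≤ u i)
    (f : EuclideanSpace ℝ (Fin n) → ℝ)
    (c : EuclideanSpace ℝ (Fin n) → EuclideanSpace ℝ (Fin m))
    (hf : ContDiff ℝ 1 f) (hc : ContDiff ℝ 1 c)
    (K : Set (EuclideanSpace ℝ (Fin n))) (hK : IsCompact K)
    (μ : ℝ) (hμ : 0 < μ)
    (x : ℕ → EuclideanSpace ℝ (Fin n)) (hxK : ∀ j, x j ∈ K)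
    (hbox : ∀ j, ∀ i, l i ≤ x j i ∧ x j i ≤ u i)
    (y yh : ℕ → EuclideanSpace ℝ (Fin m))
    (hyh : ∀ j, ‖FL l u f c (x j) (yh j)‖ ≤ ‖FL l u f c (x j) (y j)‖)
    (t T : ℕ → ℝ) (ht_pos : ∀ j, 0 < t j) (hT_pos : ∀ j, 0 < T j)
    (ht_lim : Tendsto t atTop (nhds 0)) (hT_lim : Tendsto T atTop (nhds 0))
    (hc_target : ∀ j, ‖c (x j)‖ ≤ t j)
    (hstat_target : ∀ j,
      min ‖FL l u f c (x j) (yh j)‖ ‖FAL l u f c (x j) (y j) μ‖ ≤ T j) :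
    Tendsto (fun j => c (x j)) atTop (nhds 0) ∧
    Tendsto (fun j => FL l u f c (x j) (yh j)) atTop (nhds 0) ∧
    ∀ p : EuclideanSpace ℝ (Fin n) × EuclideanSpace ℝ (Fin m),
      MapClusterPt p atTop (fun j => (x j, yh j)) →
        c p.1 = 0 ∧ FL l u f c p.1 p.2 = 0 :=
  stmt13_general l u f c hf hc K hK μ hμ x hxK hbox y yh hyh t T ht_lim hT_lim hc_target
    hstat_target
end

section
/- Let f : ℝⁿ → ℝ and c : ℝⁿ → ℝ^m be continuously differentiable with g(x) = ∇f(x) and J(x) = ∇c(x). Suppose x ∈ ℝⁿ satisfies l ≤ x ≤ u componentwise, μ > 0, c(x) = 0, and F_AL(x, y, μ) = 0. Then F_L(x, y) = 0; hence F_OPT(x, y) = 0, i.e., (x, y) is a first-order primal-dual stationary point for minimizing f(x) subject to c(x) = 0 and l ≤ x ≤ u. -/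
/-- Whether `x ∈ [l, u]` is fixed by the clamped step along `-t` depends only on the sign of `t`;
this is why rescaling the step by `μ > 0` does not change the fixed points. -/
theorem max_min_sub_eq_self_iff {α : Type*} [AddCommGroup α] [LinearOrder α] [IsOrderedAddMonoid α]
    {l u x t : α} (hl : l ≤ x) (hu : x ≤ u) :
    max l (min u (x - t)) = x ↔ (0 < t → x = l) ∧ (t < 0 → x = u) := by
  grind

theorem boxProj_sub_smul_eq_self_iff {n : ℕ} {l u x : EuclideanSpace ℝ (Fin n)}
    (hbox : ∀ i, l i ≤ x i ∧ x i ≤ u i) {μ : ℝ} (hμ : 0 < μ) (v : EuclideanSpace ℝ (Fin n)) :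
    boxProj l u (x - μ • v) = x ↔ boxProj l u (x - v) = x := by
  simp only [PiLp.ext_iff]
  refine forall_congr' fun i => ?_
  simp only [boxProj, PiLp.sub_apply, PiLp.smul_apply, smul_eq_mul,
    max_min_sub_eq_self_iff (hbox i).1 (hbox i).2, mul_pos_iff_of_pos_left hμ]
  simp [mul_neg_iff, hμ, hμ.not_gt]

theorem stmt15_general {n m : ℕ} (l u : EuclideanSpace ℝ (Fin n))
    (f : EuclideanSpace ℝ (Fin n) → ℝ)
    (c : EuclideanSpace ℝ (Fin n) → EuclideanSpace ℝ (Fin m))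
    (x : EuclideanSpace ℝ (Fin n)) (y : EuclideanSpace ℝ (Fin m)) (μ : ℝ) (hμ : 0 < μ)
    (hbox : ∀ i, l i ≤ x i ∧ x i ≤ u i)
    (hcx : c x = 0) (hFAL : FAL l u f c x y μ = 0) :
    FL l u f c x y = 0 ∧ c x = 0 := by
  refine ⟨?_, hcx⟩
  have hfixed : boxProj l u (x - μ • (gradient f x - (fderiv ℝ c x).adjoint y)) = x := by
    simpa [FAL, hcx, sub_eq_zero] using hFAL
  rwa [FL, sub_eq_zero, ← boxProj_sub_smul_eq_self_iff hbox hμ]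

/-- If `l ≤ x ≤ u`, `μ > 0`, `c(x) = 0` and `F_AL(x, y, μ) = 0`, then `F_L(x, y) = 0`;
hence `F_OPT(x, y) = (F_L(x, y), −c(x)) = 0`: the pair `(x, y)` is a first-order
primal-dual stationary point. -/
theorem stmt15 {n m : ℕ} (l u : EuclideanSpace ℝ (Fin n)) (hlu : ∀ i, l i ≤ u i)
    (f : EuclideanSpace ℝ (Fin n) → ℝ)
    (c : EuclideanSpace ℝ (Fin n) → EuclideanSpace ℝ (Fin m))
    (hf : ContDiff ℝ 1 f) (hc : ContDiff ℝ 1 c)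
    (x : EuclideanSpace ℝ (Fin n)) (y : EuclideanSpace ℝ (Fin m)) (μ : ℝ) (hμ : 0 < μ)
    (hbox : ∀ i, l i ≤ x i ∧ x i ≤ u i)
    (hcx : c x = 0) (hFAL : FAL l u f c x y μ = 0) :
    FL l u f c x y = 0 ∧ c x = 0 :=
  stmt15_general l u f c x y μ hμ hbox hcx hFAL
end
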